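/- arXiv:1706.07973 — 4 statements merged into one kernel-verified Lean document; each statement's English description precedes it below -/
import Mathlib

section
/- Let m ∈ ℕ and w₀ ∈ ℝ^m. For all ε > 0, there exist points w₁, …, w_{2^m} in the closed ball of radius 2√m·ε around w₀ such that for any points w̃₁, …, w̃_{2^m} with ‖wᵢ − w̃ᵢ‖ < ε for all i, the open ball B(w₀, ε) is contained in the convex hull of {w̃₁, …, w̃_{2^m}}. -/
/-!
Take for `wᵢ` the vertices `w₀ + 2ε·s` of a cube, `s ∈ {±1}^m`. Given a direction `u`, the vertex
whose signs are opposite to those of `u` satisfies `⟪u, wᵢ - w₀⟫ = -2ε‖u‖₁ ≤ -2ε‖u‖`; moving it by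
less than `ε` and comparing with a point `x` of `B(w₀, ε)` still gives `⟪u, w̃ᵢ⟫ ≤ ⟪u, x⟫`. So no
linear functional separates `x` from the `w̃ᵢ`, and by Hahn–Banach `x` lies in their convex hull.
-/

open Metric
open scoped RealInnerProductSpace

section Separation

variable {E : Type*} [NormedAddCommGroup E] [InnerProductSpace ℝ E] [CompleteSpace E]

theorem mem_convexHull_of_forall_exists_inner_le {s : Set E} (hs : s.Finite) {x : E}
    (h : ∀ u : E, ∃ y ∈ s, ⟪u, y⟫ ≤ ⟪u, x⟫) : x ∈ convexHull ℝ s := by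
  by_contra hx
  obtain ⟨f, c, hfx, hfs⟩ :=
    geometric_hahn_banach_point_closed (convex_convexHull ℝ s) (hs.isClosed_convexHull (𝕜 := ℝ)) hx
  obtain ⟨y, hy, hle⟩ := h ((InnerProductSpace.toDual ℝ E).symm f)
  rw [InnerProductSpace.toDual_symm_apply, InnerProductSpace.toDual_symm_apply] at hle
  linarith [hfs y (subset_convexHull ℝ s hy)]

theorem closedBall_subset_convexHull_of_forall_exists_inner_le {ι : Type*} [Finite ι]
    {w₀ : E} {r : ℝ} {w w' : ι → E} (hw : ∀ u : E, ∃ i, ⟪u, w i - w₀⟫ ≤ -(2 * r * ‖u‖))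
    (hw' : ∀ i, ‖w i - w' i‖ ≤ r) : closedBall w₀ r ⊆ convexHull ℝ (Set.range w') := by
  intro x hx
  refine mem_convexHull_of_forall_exists_inner_le (Set.finite_range w') fun u => ?_
  obtain ⟨i, hi⟩ := hw u
  have hmove : ⟪u, w' i - w i⟫ ≤ r * ‖u‖ :=
    calc ⟪u, w' i - w i⟫ ≤ ‖u‖ * ‖w' i - w i‖ := real_inner_le_norm _ _
      _ ≤ ‖u‖ * r := by gcongr; rw [norm_sub_rev]; exact hw' i
      _ = r * ‖u‖ := mul_comm _ _
  have hx : -(r * ‖u‖) ≤ ⟪u, x - w₀⟫ := by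
    have := abs_real_inner_le_norm u (x - w₀)
    have : ‖u‖ * ‖x - w₀‖ ≤ ‖u‖ * r := by gcongr; exact mem_closedBall_iff_norm.mp hx
    linarith [neg_abs_le ⟪u, x - w₀⟫]
  refine ⟨w' i, Set.mem_range_self i, ?_⟩
  calc ⟪u, w' i⟫ = ⟪u, w₀⟫ + ⟪u, w i - w₀⟫ + ⟪u, w' i - w i⟫ := by
        simp only [inner_sub_right]; ring
    _ ≤ ⟪u, w₀⟫ + ⟪u, x - w₀⟫ := by linarith
    _ = ⟪u, x⟫ := by rw [inner_sub_right]; ring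

end Separation

namespace EuclideanSpace

variable {ι : Type*} [Fintype ι]

theorem norm_le_sum_abs (u : EuclideanSpace ℝ ι) : ‖u‖ ≤ ∑ j, |u j| := by
  refine le_of_sq_le_sq ?_ (Finset.sum_nonneg fun j _ => abs_nonneg (u j))
  rw [real_norm_sq_eq]
  calc ∑ j, u j ^ 2 = ∑ j, |u j| ^ 2 := by simp only [sq_abs]
    _ ≤ (∑ j, |u j|) ^ 2 := Finset.sum_sq_le_sq_sum_of_nonneg fun j _ => abs_nonneg (u j)

/-- The vertex of the cube `[-1, 1]^ι` with sign `+1` at `j` iff `s j = 0`. -/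
def signVector (s : ι → Fin 2) : EuclideanSpace ℝ ι :=
  WithLp.toLp 2 fun j => if s j = 0 then 1 else -1

theorem norm_signVector (s : ι → Fin 2) : ‖signVector s‖ = √(Fintype.card ι) := by
  rw [norm_eq]
  congr 1
  simp [signVector, apply_ite]

theorem exists_inner_signVector_le (u : EuclideanSpace ℝ ι) :
    ∃ s, ⟪u, signVector s⟫ ≤ -‖u‖ := by
  refine ⟨fun j => if 0 ≤ u j then 1 else 0, ?_⟩
  have hterm : ∀ j, (signVector fun j => if 0 ≤ u j then (1 : Fin 2) else 0) j * u j = -|u j| := by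
    intro j
    by_cases h : 0 ≤ u j
    · simp [signVector, h, abs_of_nonneg h]
    · simp [signVector, h, abs_of_neg (not_le.mp h)]
  rw [PiLp.inner_apply]
  simp only [RCLike.inner_apply, conj_trivial, hterm, Finset.sum_neg_distrib, neg_le_neg_iff]
  exact norm_le_sum_abs u

end EuclideanSpace

open EuclideanSpace in
/-- Perturbed convex hull lemma: there are `2^m` points in the closed ball of radius
`2√m·ε` around `w₀` such that any `ε`-perturbations of them have convex hull containing
the open ball `B(w₀, ε)`. -/
theorem stmt0 (m : ℕ) (w₀ : EuclideanSpace ℝ (Fin m)) (ε : ℝ) (hε : 0 < ε) :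
    ∃ w : Fin (2 ^ m) → EuclideanSpace ℝ (Fin m),
      (∀ i, w i ∈ closedBall w₀ (2 * Real.sqrt m * ε)) ∧
      ∀ w' : Fin (2 ^ m) → EuclideanSpace ℝ (Fin m),
        (∀ i, ‖w i - w' i‖ < ε) →
        ball w₀ ε ⊆ convexHull ℝ (Set.range w') := by
  set w : Fin (2 ^ m) → EuclideanSpace ℝ (Fin m) :=
    fun i => w₀ + (2 * ε) • signVector (finFunctionFinEquiv.symm i) with hw
  refine ⟨w, fun i => ?_, fun w' hw' => ?_⟩
  · rw [mem_closedBall, dist_eq_norm, hw, add_sub_cancel_left, norm_smul, norm_signVector,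
      Real.norm_of_nonneg (by positivity), Fintype.card_fin]
    linarith
  · refine ball_subset_closedBall.trans <|
      closedBall_subset_convexHull_of_forall_exists_inner_le (fun u => ?_) fun i => (hw' i).le
    obtain ⟨s, hs⟩ := exists_inner_signVector_le u
    refine ⟨finFunctionFinEquiv s, ?_⟩
    rw [hw, add_sub_cancel_left, Equiv.symm_apply_apply, inner_smul_right]
    linarith [mul_le_mul_of_nonneg_left hs (by positivity : (0 : ℝ) ≤ 2 * ε)]
end

section
/- Let f : X → X be continuous on a compact metric space with μ ↦ h_μ(f) upper semi-continuous, Φ ∈ C(X, ℝ^m), and let (Φ_{ε_n})_n be a sequence of continuous potentials with ‖Φ − Φ_{ε_n}‖_∞ < ε_n and ε_n → 0. Fix w₀ ∈ Rot(Φ) and α ≥ 1. Then h^u_{Φ_{ε_n}}(w₀, α·ε_n) → H_Φ(w₀) as n → ∞. -/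
open MeasureTheory

variable {X : Type*} [MetricSpace X] [CompactSpace X] [MeasurableSpace X] [BorelSpace X]

/-- `μ` is an `f`-invariant Borel probability measure. -/
def InvariantProb (f : X → X) (μ : ProbabilityMeasure X) : Prop :=
  (μ : Measure X).map f = (μ : Measure X)

/-- The generalized rotation set of a potential `Φ : X → ℝ^m` with respect to `f`. -/
def Rot (f : X → X) {m : ℕ} (Φ : X → EuclideanSpace ℝ (Fin m)) :
    Set (EuclideanSpace ℝ (Fin m)) :=
  {w | ∃ μ : ProbabilityMeasure X, InvariantProb f μ ∧ (∫ x, Φ x ∂(μ : Measure X)) = w}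

/-- The localized entropy `H(w) = sup { h_μ(f) : μ invariant, rv(μ) = w }`, where the
measure-theoretic entropy is given by the function `h`. -/
noncomputable def locEnt (f : X → X) (h : ProbabilityMeasure X → ℝ) {m : ℕ}
    (Φ : X → EuclideanSpace ℝ (Fin m)) (w : EuclideanSpace ℝ (Fin m)) : ℝ :=
  sSup (h '' {μ | InvariantProb f μ ∧ (∫ x, Φ x ∂(μ : Measure X)) = w})

/-- The maximum local entropy of `Ψ` on the closed ball `B̄(w₀, r)`. -/
noncomputable def hu (f : X → X) (h : ProbabilityMeasure X → ℝ) {m : ℕ}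
    (Ψ : X → EuclideanSpace ℝ (Fin m)) (w₀ : EuclideanSpace ℝ (Fin m)) (r : ℝ) : ℝ :=
  sSup (locEnt f h Ψ '' (Metric.closedBall w₀ r ∩ Rot f Ψ))

/-- The minimum local entropy of `Ψ` on the closed ball `B̄(w₀, r)`. -/
noncomputable def hl (f : X → X) (h : ProbabilityMeasure X → ℝ) {m : ℕ}
    (Ψ : X → EuclideanSpace ℝ (Fin m)) (w₀ : EuclideanSpace ℝ (Fin m)) (r : ℝ) : ℝ :=
  sInf (locEnt f h Ψ '' (Metric.closedBall w₀ r ∩ Rot f Ψ))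

/-! The lower bound is soft: `‖∫ Φ dμ - ∫ Φ_{ε_n} dμ‖ ≤ ε_n ≤ α ε_n`, so every invariant `μ`
with `∫ Φ dμ = w₀` is counted in `h^u_{Φ_{ε_n}}(w₀, α ε_n)`. Conversely, every measure counted
there has `∫ Φ dμ` within `(1 + α) ε_n` of `w₀`. Given `c > H_Φ(w₀)`, the invariant measures
with `h_μ ≥ c` form a compact set (invariant measures are closed in the compact space of
probability measures, and `h` is upper semicontinuous on them), so their rotation vectors form
a compact set avoiding `w₀`, hence at positive distance from it. -/

open Filter Topology Set

theorem IsCompact.eventually_forall_fiber_lt {P E γ : Type*} [TopologicalSpace P]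
    [MetricSpace E] [LinearOrder γ] {S : Set P} (hS : IsCompact S) {g : P → γ}
    (hg : UpperSemicontinuousOn g S) {F : P → E} (hF : Continuous F) {w₀ : E} {c : γ}
    (hc : ∀ p ∈ S, F p = w₀ → g p < c) :
    ∀ᶠ w in 𝓝 w₀, ∀ p ∈ S, F p = w → g p < c := by
  have hK : IsClosed (F '' (S ∩ g ⁻¹' Ici c)) :=
    ((hg.isCompact_inter_preimage_Ici hS c).image hF).isClosed
  have hw₀ : w₀ ∉ F '' (S ∩ g ⁻¹' Ici c) := by
    rintro ⟨p, ⟨hpS, hpc⟩, hpw⟩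
    exact (hc p hpS hpw).not_ge hpc
  filter_upwards [hK.isOpen_compl.mem_nhds hw₀] with w hw p hpS hpw
  by_contra! hpc
  exact hw ⟨p, ⟨hpS, hpc⟩, hpw⟩

section Measures

variable {Ω : Type*} [TopologicalSpace Ω] [CompactSpace Ω] [MeasurableSpace Ω]
  [OpensMeasurableSpace Ω]

theorem Continuous.integrable_of_compactSpace {E : Type*} [NormedAddCommGroup E] {Ψ : Ω → E}
    (hΨ : Continuous Ψ) (μ : Measure Ω) [IsFiniteMeasure μ] : Integrable Ψ μ :=
  hΨ.integrable_of_hasCompactSupport (HasCompactSupport.of_compactSpace Ψ)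

theorem continuous_integral_euclideanSpace {ι : Type*} [Fintype ι] {Ψ : Ω → EuclideanSpace ℝ ι}
    (hΨ : Continuous Ψ) : Continuous fun μ : ProbabilityMeasure Ω ↦ ∫ x, Ψ x ∂(μ : Measure Ω) := by
  refine (PiLp.continuous_toLp 2 _).comp (continuous_pi fun i ↦ ?_)
  have hΨi : ∀ j, Continuous fun x ↦ Ψ x j :=
    fun j ↦ (continuous_apply j).comp ((PiLp.continuous_ofLp 2 _).comp hΨ)
  refine (ProbabilityMeasure.continuous_integral_continuousMap
    (⟨_, hΨi i⟩ : C(Ω, ℝ))).congr fun μ ↦ ?_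
  exact (eval_integral_piLp (fun j ↦ (hΨi j).integrable_of_compactSpace _) i).symm

end Measures

theorem dist_integral_le_of_forall_dist_le {α E : Type*} [MeasurableSpace α]
    [NormedAddCommGroup E] [NormedSpace ℝ E] {μ : Measure α} [IsProbabilityMeasure μ]
    {Φ Ψ : α → E} (hΦ : Integrable Φ μ) (hΨ : Integrable Ψ μ) {ε : ℝ}
    (hε : ∀ x, dist (Φ x) (Ψ x) ≤ ε) : dist (∫ x, Φ x ∂μ) (∫ x, Ψ x ∂μ) ≤ ε := by
  rw [dist_eq_norm, ← integral_sub hΦ hΨ]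
  simpa using norm_integral_le_of_norm_le_const (μ := μ) (f := fun x ↦ Φ x - Ψ x)
    (.of_forall fun x ↦ dist_eq_norm (Φ x) (Ψ x) ▸ hε x)

theorem isClosed_setOf_invariantProb {Ω : Type*} [TopologicalSpace Ω] [MeasurableSpace Ω]
    [BorelSpace Ω] [HasOuterApproxClosed Ω] {f : Ω → Ω} (hf : Continuous f) :
    IsClosed {μ : ProbabilityMeasure Ω | InvariantProb f μ} := by
  have : {μ : ProbabilityMeasure Ω | InvariantProb f μ} =
      {μ | μ.map hf.measurable.aemeasurable = μ} := by
    ext μ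
    rw [mem_ofPred_eq, mem_ofPred_eq, ← ProbabilityMeasure.toMeasure_injective.eq_iff,
      ProbabilityMeasure.toMeasure_map, InvariantProb]
  exact this ▸ isClosed_eq (ProbabilityMeasure.continuous_map hf) continuous_id

section LocalEntropy

variable {Ω : Type*} [MeasurableSpace Ω] {f : Ω → Ω} {h : ProbabilityMeasure Ω → ℝ} {m : ℕ}
  {Ψ : Ω → EuclideanSpace ℝ (Fin m)}

theorem le_locEnt (hbdd : BddAbove (range h)) {μ : ProbabilityMeasure Ω}
    (hμ : InvariantProb f μ) : h μ ≤ locEnt f h Ψ (∫ x, Ψ x ∂(μ : Measure Ω)) :=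
  le_csSup (hbdd.mono (image_subset_range _ _)) ⟨μ, ⟨hμ, rfl⟩, rfl⟩

theorem locEnt_le {w : EuclideanSpace ℝ (Fin m)} (hw : w ∈ Rot f Ψ) {c : ℝ}
    (hc : ∀ μ, InvariantProb f μ → ∫ x, Ψ x ∂(μ : Measure Ω) = w → h μ ≤ c) :
    locEnt f h Ψ w ≤ c := by
  obtain ⟨μ, hμ⟩ := hw
  exact csSup_le ⟨h μ, μ, hμ, rfl⟩ fun _ ⟨ν, hν, hνc⟩ ↦ hνc ▸ hc ν hν.1 hν.2

theorem bddAbove_range_locEnt (hbdd : BddAbove (range h)) :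
    BddAbove (range (locEnt f h Ψ)) := by
  obtain ⟨b, hb⟩ := hbdd
  -- `max b 0`: off `Rot f Ψ` the fiber is empty and `locEnt` takes the junk value `sSup ∅ = 0`.
  refine ⟨max b 0, forall_mem_range.2 fun _ ↦ Real.sSup_le ?_ (le_max_right b 0)⟩
  rintro _ ⟨μ, -, rfl⟩
  exact (hb (mem_range_self μ)).trans (le_max_left b 0)

theorem locEnt_le_hu (hbdd : BddAbove (range h)) {w₀ w : EuclideanSpace ℝ (Fin m)} {r : ℝ}
    (hw : w ∈ Metric.closedBall w₀ r ∩ Rot f Ψ) : locEnt f h Ψ w ≤ hu f h Ψ w₀ r :=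
  le_csSup ((bddAbove_range_locEnt hbdd).mono (image_subset_range _ _)) ⟨w, hw, rfl⟩

theorem hu_le {w₀ : EuclideanSpace ℝ (Fin m)} {r : ℝ}
    (hne : (Metric.closedBall w₀ r ∩ Rot f Ψ).Nonempty) {c : ℝ}
    (hc : ∀ μ, InvariantProb f μ → ∫ x, Ψ x ∂(μ : Measure Ω) ∈ Metric.closedBall w₀ r →
      h μ ≤ c) :
    hu f h Ψ w₀ r ≤ c :=
  csSup_le (hne.image _) fun _ ⟨_, hw, hwc⟩ ↦
    hwc ▸ locEnt_le hw.2 fun μ hμ hμw ↦ hc μ hμ (hμw ▸ hw.1)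

theorem locEnt_le_hu_of_forall_dist_le (hbdd : BddAbove (range h))
    {Φ : Ω → EuclideanSpace ℝ (Fin m)} {w₀ : EuclideanSpace ℝ (Fin m)} (hw₀ : w₀ ∈ Rot f Φ)
    {r : ℝ} (hΨΦ : ∀ μ, InvariantProb f μ →
      dist (∫ x, Ψ x ∂(μ : Measure Ω)) (∫ x, Φ x ∂(μ : Measure Ω)) ≤ r) :
    locEnt f h Φ w₀ ≤ hu f h Ψ w₀ r :=
  locEnt_le hw₀ fun μ hμ hμw ↦ (le_locEnt hbdd hμ).trans <|
    locEnt_le_hu hbdd ⟨Metric.mem_closedBall.2 (hμw ▸ hΨΦ μ hμ), μ, hμ, rfl⟩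

theorem hu_le_of_forall_dist_le {Φ : Ω → EuclideanSpace ℝ (Fin m)}
    {w₀ : EuclideanSpace ℝ (Fin m)} (hw₀ : w₀ ∈ Rot f Φ) {r s : ℝ} (hsr : s ≤ r)
    (hΨΦ : ∀ μ, InvariantProb f μ →
      dist (∫ x, Ψ x ∂(μ : Measure Ω)) (∫ x, Φ x ∂(μ : Measure Ω)) ≤ s) {c : ℝ}
    (hc : ∀ μ, InvariantProb f μ → dist (∫ x, Φ x ∂(μ : Measure Ω)) w₀ ≤ r + s → h μ ≤ c) :
    hu f h Ψ w₀ r ≤ c := by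
  obtain ⟨μ₀, hμ₀, hμ₀w⟩ := hw₀
  refine hu_le ⟨_, ?_, μ₀, hμ₀, rfl⟩ fun μ hμ hμr ↦ hc μ hμ ?_
  · exact Metric.mem_closedBall.2 (hμ₀w ▸ (hΨΦ μ₀ hμ₀).trans hsr)
  · calc dist (∫ x, Φ x ∂(μ : Measure Ω)) w₀
        ≤ dist (∫ x, Φ x ∂(μ : Measure Ω)) (∫ x, Ψ x ∂(μ : Measure Ω))
          + dist (∫ x, Ψ x ∂(μ : Measure Ω)) w₀ := dist_triangle _ _ _
      _ ≤ s + r := add_le_add ((dist_comm _ _).trans_le (hΨΦ μ hμ)) hμr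
      _ = r + s := add_comm s r

end LocalEntropy

/-- Proposition (convergence of maximal local entropies): if `(Φ_{ε_n})` is an
approximating sequence of `Φ`, `w₀ ∈ Rot(Φ)` and `α ≥ 1`, then
`h^u_{Φ_{ε_n}}(w₀, α ε_n) → H_Φ(w₀)`. -/
theorem stmt7 (m : ℕ) (f : X → X) (hf : Continuous f)
    (h : ProbabilityMeasure X → ℝ)
    (husc : UpperSemicontinuousOn h {μ | InvariantProb f μ})
    (hbdd : BddAbove (Set.range h))
    (Φ : X → EuclideanSpace ℝ (Fin m)) (hΦ : Continuous Φ)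
    (ε : ℕ → ℝ) (hεpos : ∀ n, 0 < ε n) (hεto : Filter.Tendsto ε Filter.atTop (nhds 0))
    (Φseq : ℕ → X → EuclideanSpace ℝ (Fin m)) (hΦseqc : ∀ n, Continuous (Φseq n))
    (happrox : ∀ n x, ‖Φ x - Φseq n x‖ < ε n)
    (w₀ : EuclideanSpace ℝ (Fin m)) (hw₀ : w₀ ∈ Rot f Φ)
    (α : ℝ) (hα : 1 ≤ α) :
    Filter.Tendsto (fun n => hu f h (Φseq n) w₀ (α * ε n)) Filter.atTop
      (nhds (locEnt f h Φ w₀)) := by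
  have hrv : ∀ n (μ : ProbabilityMeasure X),
      dist (∫ x, Φseq n x ∂(μ : Measure X)) (∫ x, Φ x ∂(μ : Measure X)) ≤ ε n :=
    fun n μ ↦ dist_integral_le_of_forall_dist_le ((hΦseqc n).integrable_of_compactSpace _)
      (hΦ.integrable_of_compactSpace _) fun x ↦ by
        rw [dist_comm, dist_eq_norm]
        exact (happrox n x).le
  have hεα : ∀ n, ε n ≤ α * ε n := fun n ↦ le_mul_of_one_le_left (hεpos n).le hα
  refine tendsto_order.2 ⟨fun a ha ↦ .of_forall fun n ↦ ha.trans_le <|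
    locEnt_le_hu_of_forall_dist_le hbdd hw₀ fun μ _ ↦ (hrv n μ).trans (hεα n), fun c hc ↦ ?_⟩
  obtain ⟨c', hc', hc'c⟩ := exists_between hc
  obtain ⟨r, hr, hnear⟩ := Metric.eventually_nhds_iff.1 <|
    (isClosed_setOf_invariantProb hf).isCompact.eventually_forall_fiber_lt husc
      (continuous_integral_euclideanSpace hΦ) (w₀ := w₀) fun μ hμ hμw ↦
        (le_locEnt hbdd hμ).trans_lt (hμw ▸ hc')
  have hsmall : ∀ᶠ n in atTop, α * ε n + ε n < r :=
    ((hεto.const_mul α).add hεto).eventually (gt_mem_nhds (by simpa using hr))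
  filter_upwards [hsmall] with n hn
  exact (hu_le_of_forall_dist_le hw₀ (hεα n) (fun μ _ ↦ hrv n μ)
    fun μ hμ hμr ↦ (hnear (hμr.trans_lt hn) μ hμ rfl).le).trans_lt hc'c
end

section
/- Let f : X → X be continuous on a compact metric space with finite topological entropy, Φ ∈ C(X, ℝ^m), v ∈ ℝ^m \ {0}, and let μ be an equilibrium state of the potential v·Φ. Let r = dist(rv(μ), ∂Rot(Φ)). Then ‖v‖ ≤ (2/r)·h_top(f). -/
open MeasureTheory

variable {X : Type*} [MetricSpace X] [CompactSpace X] [MeasurableSpace X] [BorelSpace X]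

/-- The topological pressure of a one-dimensional potential via the variational principle. -/
noncomputable def Ptop (f : X → X) (h : ProbabilityMeasure X → ℝ) (ψ : X → ℝ) : ℝ :=
  sSup {c | ∃ μ : ProbabilityMeasure X, InvariantProb f μ ∧
    h μ + (∫ x, ψ x ∂(μ : Measure X)) = c}

/-!
If `μ` is an equilibrium state of `v·Φ`, then for every invariant `ν` the variational principle
gives `⟪v, rv(ν) - rv(μ)⟫ ≤ h(μ) - h(ν) ≤ h(μ)`. The open ball of radius `r` around `rv(μ)` lies
in the rotation set, since it is connected, contains `rv(μ)` and misses the frontier; testing the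
inequality on this ball in the direction of `v` gives `r ‖v‖ ≤ h(μ) ≤ h_top(f)`.
-/

open Metric

theorem IsPreconnected.subset_of_disjoint_frontier {E : Type*} [TopologicalSpace E]
    {s t : Set E} (hs : IsPreconnected s) (hst : Disjoint s (frontier t)) {x : E} (hxs : x ∈ s)
    (hxt : x ∈ t) : s ⊆ t := by
  have hcover : s ⊆ interior t ∪ interior tᶜ := by
    rw [← compl_frontier_eq_union_interior]
    exact hst.subset_compl_right
  have hdisj : Disjoint (interior t) (interior tᶜ) := by
    rw [interior_compl]
    exact disjoint_compl_right.mono_left (interior_subset.trans subset_closure)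
  rcases hs.subset_or_subset isOpen_interior isOpen_interior hdisj hcover with hin | hout
  · exact hin.trans interior_subset
  · exact absurd hxt (interior_subset (hout hxs))

theorem Metric.ball_infDist_frontier_subset {E : Type*} [NormedAddCommGroup E] [NormedSpace ℝ E]
    {S : Set E} {w : E} (hw : w ∈ S) : ball w (infDist w (frontier S)) ⊆ S := by
  intro y hy
  have hwy : w ∈ ball w (infDist w (frontier S)) :=
    mem_ball_self (dist_nonneg.trans_lt (mem_ball.1 hy))
  refine (convex_ball w _).isPreconnected.subset_of_disjoint_frontier ?_ hwy hw hy
  exact Set.disjoint_left.2 fun z hz => notMem_of_dist_lt_infDist (by rwa [dist_comm, ← mem_ball])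

theorem mul_norm_le_of_forall_inner_le {E : Type*} [NormedAddCommGroup E]
    [InnerProductSpace ℝ E] {v : E} {r c : ℝ} (hr : 0 < r)
    (h : ∀ y ∈ ball (0 : E) r, inner ℝ v y ≤ c) : r * ‖v‖ ≤ c := by
  rcases eq_or_ne v 0 with rfl | hv
  · simpa using h 0 (mem_ball_self hr)
  have hclosedBall : closedBall (0 : E) r ⊆ {y | inner ℝ v y ≤ c} := by
    rw [← closure_ball 0 hr.ne']
    exact closure_minimal h (isClosed_le (continuous_const.inner continuous_id) continuous_const)
  have hnorm : ‖v‖ ≠ 0 := norm_ne_zero_iff.2 hv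
  have hmem : (r / ‖v‖) • v ∈ closedBall (0 : E) r := by
    simp [norm_smul, abs_of_pos hr, hnorm]
  calc r * ‖v‖ = inner ℝ v ((r / ‖v‖) • v) := by
        rw [real_inner_smul_right, real_inner_self_eq_norm_sq]
        field_simp
    _ ≤ c := hclosedBall hmem

section Pressure

variable {f : X → X} {h : ProbabilityMeasure X → ℝ} {ψ : X → ℝ}

def IsEquilibriumState (f : X → X) (h : ProbabilityMeasure X → ℝ) (ψ : X → ℝ)
    (μ : ProbabilityMeasure X) : Prop :=
  InvariantProb f μ ∧ h μ + ∫ x, ψ x ∂(μ : Measure X) = Ptop f h ψ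

theorem Continuous.integrable_of_compactSpace_s11 {E : Type*} [NormedAddCommGroup E] {φ : X → E}
    (hφ : Continuous φ) (ν : ProbabilityMeasure X) : Integrable φ (ν : Measure X) :=
  hφ.integrable_of_hasCompactSupport (HasCompactSupport.of_compactSpace φ)

theorem bddAbove_pressure_set (hbdd : BddAbove (Set.range h)) (hψ : Continuous ψ) :
    BddAbove {c | ∃ ν : ProbabilityMeasure X, InvariantProb f ν ∧
      h ν + ∫ x, ψ x ∂(ν : Measure X) = c} := by
  obtain ⟨B, hB⟩ := hbdd
  obtain ⟨C, hC⟩ := (isCompact_range hψ).bddAbove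
  refine ⟨B + C, ?_⟩
  rintro c ⟨ν, -, rfl⟩
  have hint : ∫ x, ψ x ∂(ν : Measure X) ≤ C := by
    calc ∫ x, ψ x ∂(ν : Measure X) ≤ ∫ _, C ∂(ν : Measure X) :=
          integral_mono (hψ.integrable_of_compactSpace_s11 ν) (integrable_const C)
            fun x => hC ⟨x, rfl⟩
      _ = C := by simp
  exact add_le_add (hB ⟨ν, rfl⟩) hint

theorem le_Ptop (hbdd : BddAbove (Set.range h)) (hψ : Continuous ψ) {ν : ProbabilityMeasure X}
    (hν : InvariantProb f ν) : h ν + ∫ x, ψ x ∂(ν : Measure X) ≤ Ptop f h ψ :=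
  le_csSup (bddAbove_pressure_set hbdd hψ) ⟨ν, hν, rfl⟩

theorem IsEquilibriumState.inner_sub_le {m : ℕ} {Φ : X → EuclideanSpace ℝ (Fin m)}
    {v : EuclideanSpace ℝ (Fin m)} {μ ν : ProbabilityMeasure X}
    (hμ : IsEquilibriumState f h (fun x => inner ℝ v (Φ x)) μ)
    (hnonneg : ∀ ν : ProbabilityMeasure X, InvariantProb f ν → 0 ≤ h ν)
    (hbdd : BddAbove (Set.range h)) (hΦ : Continuous Φ) (hν : InvariantProb f ν) :
    inner ℝ v ((∫ x, Φ x ∂(ν : Measure X)) - ∫ x, Φ x ∂(μ : Measure X)) ≤ h μ := by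
  have hvariational :=
    le_Ptop (f := f) (ψ := fun x => inner ℝ v (Φ x)) hbdd (continuous_const.inner hΦ) hν
  rw [← hμ.2, integral_inner (hΦ.integrable_of_compactSpace_s11 ν),
    integral_inner (hΦ.integrable_of_compactSpace_s11 μ)] at hvariational
  rw [inner_sub_right]
  linarith [hnonneg ν hν]

end Pressure

theorem stmt11_general (m : ℕ) (f : X → X)
    (h : ProbabilityMeasure X → ℝ)
    (hnonneg : ∀ μ : ProbabilityMeasure X, InvariantProb f μ → 0 ≤ h μ)
    (hbdd : BddAbove (Set.range h))
    (Φ : X → EuclideanSpace ℝ (Fin m)) (hΦ : Continuous Φ)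
    (v : EuclideanSpace ℝ (Fin m))
    (μ : ProbabilityMeasure X) (hμinv : InvariantProb f μ)
    (hequil : h μ + (∫ x, (inner ℝ v (Φ x) : ℝ) ∂(μ : Measure X)) =
      Ptop f h (fun x => (inner ℝ v (Φ x) : ℝ)))
    (r : ℝ) (hr : r = Metric.infDist (∫ x, Φ x ∂(μ : Measure X)) (frontier (Rot f Φ)))
    (hrpos : 0 < r) :
    ‖v‖ ≤ (2 / r) * Ptop f h (fun _ => 0) := by
  set w := ∫ x, Φ x ∂(μ : Measure X)
  have hball : ball w r ⊆ Rot f Φ := hr ▸ ball_infDist_frontier_subset ⟨μ, hμinv, rfl⟩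
  have hrv : r * ‖v‖ ≤ h μ := by
    refine mul_norm_le_of_forall_inner_le hrpos fun y hy => ?_
    obtain ⟨ν, hν, hνrv⟩ := hball (show w + y ∈ ball w r by simpa using hy)
    have hdir := IsEquilibriumState.inner_sub_le ⟨hμinv, hequil⟩ hnonneg hbdd hΦ hν
    rwa [hνrv, add_sub_cancel_left] at hdir
  have hentropy : h μ ≤ Ptop f h (fun _ => 0) := by
    simpa using le_Ptop (ψ := fun _ => 0) hbdd continuous_const hμinv
  have hPnonneg : 0 ≤ Ptop f h (fun _ => 0) := (hnonneg μ hμinv).trans hentropy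
  rw [div_mul_eq_mul_div, le_div_iff₀ hrpos]
  linarith

/-- Bound for the norm of `v` when `v·Φ` admits an equilibrium state: if `μ` is an
equilibrium state of `v·Φ` and `r = dist(rv(μ), ∂Rot(Φ)) > 0`, then
`‖v‖ ≤ (2/r) h_top(f)`.  Here `h_top(f) = P_top(0)` and the entropy map `h` is
nonnegative and bounded above (finite topological entropy). -/
theorem stmt11 (m : ℕ) (f : X → X) (hf : Continuous f)
    (h : ProbabilityMeasure X → ℝ)
    (hnonneg : ∀ μ : ProbabilityMeasure X, InvariantProb f μ → 0 ≤ h μ)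
    (hbdd : BddAbove (Set.range h))
    (Φ : X → EuclideanSpace ℝ (Fin m)) (hΦ : Continuous Φ)
    (v : EuclideanSpace ℝ (Fin m)) (hv : v ≠ 0)
    (μ : ProbabilityMeasure X) (hμinv : InvariantProb f μ)
    (hequil : h μ + (∫ x, (inner ℝ v (Φ x) : ℝ) ∂(μ : Measure X)) =
      Ptop f h (fun x => (inner ℝ v (Φ x) : ℝ)))
    (r : ℝ) (hr : r = Metric.infDist (∫ x, Φ x ∂(μ : Measure X)) (frontier (Rot f Φ)))
    (hrpos : 0 < r) :
    ‖v‖ ≤ (2 / r) * Ptop f h (fun _ => 0) :=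
  stmt11_general m f h hnonneg hbdd Φ hΦ v μ hμinv hequil r hr hrpos
end

section
/- Let f : X → X be a transitive subshift of finite type with transition matrix A, and Φ : X → ℝ constant on cylinders of length 2 with values Φ(i,j) on the cylinder C(i,j). Set B_{ij} = e^{Φ(i,j)} A_{ij} with Perron–Frobenius eigenvalue λ, and let μ = μ_{(p,P)} be the associated Markov measure (P_{ij} = B_{ij} r_j / (λ r_i), p_i = r_i l_i with (r,l)=1). Then h_μ(f) + ∫Φ dμ = log λ; in particular h_μ(f) = log λ − ∑_{i,j} p_i P_{ij} Φ(i,j). -/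
/-!
On the support of `B`, `log P_{ij} = Φ(i,j) - log λ + log r_j - log r_i`: the transition
log-probabilities differ from the potential by the constant `log λ` and a coboundary. Integrated
against the Markov measure, the constant contributes `log λ` because `p` is a probability vector,
and the coboundary contributes nothing because `p` is `P`-stationary and `P` is stochastic.
-/

open Finset

section MarkovChain

variable {ι : Type*} [Fintype ι] (p : ι → ℝ) (P : Matrix ι ι ℝ)

theorem sum_sum_mul_coboundary_eq_zero (hrow : ∀ i, ∑ j, P i j = 1)
    (hstat : ∀ j, ∑ i, p i * P i j = p j) (g : ι → ℝ) :
    ∑ i, ∑ j, p i * P i j * (g i - g j) = 0 := by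
  have hsource : ∑ i, ∑ j, p i * P i j * g i = ∑ i, p i * g i :=
    sum_congr rfl fun i _ => by rw [← sum_mul, ← mul_sum, hrow, mul_one]
  have htarget : ∑ i, ∑ j, p i * P i j * g j = ∑ j, p j * g j := by
    rw [sum_comm]
    exact sum_congr rfl fun j _ => by rw [← sum_mul, hstat]
  simp only [mul_sub, sum_sub_distrib, hsource, htarget, sub_self]

theorem entropy_add_integral_eq_of_log_eq (hrow : ∀ i, ∑ j, P i j = 1)
    (hstat : ∀ j, ∑ i, p i * P i j = p j) (hp : ∑ i, p i = 1)
    (Φ : ι → ι → ℝ) (g : ι → ℝ) (c : ℝ)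
    (hlog : ∀ i j, P i j ≠ 0 → Real.log (P i j) = Φ i j - c + g j - g i) :
    -∑ i, ∑ j, p i * P i j * Real.log (P i j) + ∑ i, ∑ j, p i * P i j * Φ i j = c := by
  have hterm : ∀ i j, -(p i * P i j * Real.log (P i j)) + p i * P i j * Φ i j
      = p i * P i j * c + p i * P i j * (g i - g j) := by
    intro i j
    by_cases h : P i j = 0
    · simp [h]
    · rw [hlog i j h]
      ring
  have hmass : ∑ i, ∑ j, p i * P i j * c = c := by
    simp only [← sum_mul, ← mul_sum, hrow, mul_one, hp, one_mul]
  calc _ = ∑ i, ∑ j, (-(p i * P i j * Real.log (P i j)) + p i * P i j * Φ i j) := by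
        simp only [← sum_neg_distrib, ← sum_add_distrib]
    _ = c := by
        simp only [hterm, sum_add_distrib, hmass,
          sum_sum_mul_coboundary_eq_zero p P hrow hstat, add_zero]

end MarkovChain

section PerronFrobenius

variable {ι : Type*} {B : Matrix ι ι ℝ} {lam : ℝ} {r l : ι → ℝ}

noncomputable def markovOfEigenvector (B : Matrix ι ι ℝ) (lam : ℝ) (r : ι → ℝ) : Matrix ι ι ℝ :=
  Matrix.of fun i j => B i j * r j / (lam * r i)

theorem markovOfEigenvector_row_sum [Fintype ι] (hlam : lam ≠ 0) (hr : ∀ i, r i ≠ 0)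
    (hright : B.mulVec r = lam • r) (i : ι) :
    ∑ j, markovOfEigenvector B lam r i j = 1 := by
  have hi : ∑ j, B i j * r j = lam * r i := by
    simpa [Matrix.mulVec, dotProduct] using congrFun hright i
  simp only [markovOfEigenvector, Matrix.of_apply, ← sum_div, hi]
  exact div_self (mul_ne_zero hlam (hr i))

theorem markovOfEigenvector_stationary [Fintype ι] (hlam : lam ≠ 0) (hr : ∀ i, r i ≠ 0)
    (hleft : B.vecMul l = lam • l) (j : ι) :
    ∑ i, r i * l i * markovOfEigenvector B lam r i j = r j * l j := by
  have hj : ∑ i, l i * B i j = lam * l j := by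
    simpa [Matrix.vecMul, dotProduct] using congrFun hleft j
  have hterm : ∀ i, r i * l i * markovOfEigenvector B lam r i j = l i * B i j * (r j / lam) :=
    fun i => by
      simp only [markovOfEigenvector, Matrix.of_apply]
      field_simp [hr i]
  rw [sum_congr rfl fun i _ => hterm i, ← sum_mul, hj]
  field_simp

theorem log_markovOfEigenvector (hlam : 0 < lam) (hr : ∀ i, 0 < r i) {Φ : ι → ι → ℝ}
    {i j : ι} (hB : B i j = Real.exp (Φ i j)) :
    Real.log (markovOfEigenvector B lam r i j)
      = Φ i j - Real.log lam + Real.log (r j) - Real.log (r i) := by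
  rw [markovOfEigenvector, Matrix.of_apply, hB,
    Real.log_div (mul_pos (Real.exp_pos _) (hr j)).ne' (mul_pos hlam (hr i)).ne',
    Real.log_mul (Real.exp_ne_zero _) (hr j).ne', Real.log_exp,
    Real.log_mul hlam.ne' (hr i).ne']
  ring

end PerronFrobenius

theorem stmt18_general (d : ℕ) (A : Fin d → Fin d → Bool)
    (Φ : Fin d → Fin d → ℝ) (B : Matrix (Fin d) (Fin d) ℝ)
    (hB : ∀ i j, B i j = if A i j then Real.exp (Φ i j) else 0)
    (lam : ℝ) (hlam : 0 < lam) (r l : Fin d → ℝ)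
    (hr : ∀ i, 0 < r i)
    (hright : B.mulVec r = lam • r) (hleft : B.vecMul l = lam • l)
    (hnorm : ∑ i, r i * l i = 1) :
    (-∑ i, ∑ j, (r i * l i) * (B i j * r j / (lam * r i)) *
        Real.log (B i j * r j / (lam * r i)))
      + ∑ i, ∑ j, (r i * l i) * (B i j * r j / (lam * r i)) * Φ i j
    = Real.log lam := by
  have hr0 : ∀ i, r i ≠ 0 := fun i => (hr i).ne'
  have hlog : ∀ i j, markovOfEigenvector B lam r i j ≠ 0 →
      Real.log (markovOfEigenvector B lam r i j)
        = Φ i j - Real.log lam + Real.log (r j) - Real.log (r i) := by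
    intro i j hP
    have hA : A i j := by
      by_contra hA
      simp [markovOfEigenvector, hB, hA] at hP
    exact log_markovOfEigenvector hlam hr (by simp [hB, hA])
  exact entropy_add_integral_eq_of_log_eq (fun i => r i * l i) (markovOfEigenvector B lam r)
    (markovOfEigenvector_row_sum hlam.ne' hr0 hright)
    (markovOfEigenvector_stationary hlam.ne' hr0 hleft) hnorm Φ (fun i => Real.log (r i))
    (Real.log lam) hlog

/-- Entropy/pressure identity for the Markov measure of a 2-locally-constant potential on a
transitive SFT with transition matrix `A`: with `B_{ij} = e^{Φ(i,j)} A_{ij}`,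
Perron–Frobenius data `λ, r, l` (normalized so `(r,l)=1`), `P_{ij} = B_{ij} r_j/(λ r_i)` and
`p_i = r_i l_i`, the associated Markov measure `μ` satisfies
`h_μ(f) + ∫Φ dμ = log λ`, i.e.
`−∑ p_i P_{ij} log P_{ij} + ∑ p_i P_{ij} Φ(i,j) = log λ`. -/
theorem stmt18 (d : ℕ) (A : Fin d → Fin d → Bool)
    (hirr : ∀ i j : Fin d, ∃ n : ℕ,
      0 < ((Matrix.of fun i j : Fin d => if A i j then (1 : ℝ) else 0) ^ n) i j)
    (Φ : Fin d → Fin d → ℝ) (B : Matrix (Fin d) (Fin d) ℝ)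
    (hB : ∀ i j, B i j = if A i j then Real.exp (Φ i j) else 0)
    (lam : ℝ) (hlam : 0 < lam) (r l : Fin d → ℝ)
    (hr : ∀ i, 0 < r i) (hl : ∀ i, 0 < l i)
    (hright : B.mulVec r = lam • r) (hleft : B.vecMul l = lam • l)
    (hnorm : ∑ i, r i * l i = 1) :
    (-∑ i, ∑ j, (r i * l i) * (B i j * r j / (lam * r i)) *
        Real.log (B i j * r j / (lam * r i)))
      + ∑ i, ∑ j, (r i * l i) * (B i j * r j / (lam * r i)) * Φ i j
    = Real.log lam :=
  stmt18_general d A Φ B hB lam hlam r l hr hright hleft hnorm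
end
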